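/- arXiv:2404.03725 — 6 statements merged into one kernel-verified Lean document; each statement's English description precedes it below -/
import Mathlib

section
/- Let Δ, I > 0, let c > 0 solve e^{-6Δ/c} + e^{-6I/c} = 1, and set η = e^{-6Δ/c}. Let h(x) = -x ln x - (1-x) ln(1-x) be the binary entropy function. Then (Δ - I)·η + I = (c/6)·h(η) and Δ - I = (c/6)·h'(η), where h'(η) = ln((1-η)/η) is the derivative of h. In other words, the line y = (Δ - I)x + I is tangent to the curve y = (c/6)h(x) at x = η. -/
/-- Tangency characterization of `(c, η)`: with `h` the binary entropy function,
the line `y = (Δ-I)x + I` is tangent to `y = (c/6)·h(x)` at `x = η`. -/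
theorem stmt4 (Δ I c η : ℝ) (hΔ : 0 < Δ) (hI : 0 < I) (hc : 0 < c)
    (heq : Real.exp (-6 * Δ / c) + Real.exp (-6 * I / c) = 1)
    (hη : η = Real.exp (-6 * Δ / c)) :
    (Δ - I) * η + I = c / 6 * (-η * Real.log η - (1 - η) * Real.log (1 - η)) ∧
    Δ - I = c / 6 * Real.log ((1 - η) / η) := by
  have h1 : 1 - η = Real.exp (-6 * I / c) := by rw [hη]; linarith
  have hηpos : 0 < η := hη ▸ Real.exp_pos _
  have h1pos : 0 < 1 - η := h1 ▸ Real.exp_pos _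
  have hlη : Real.log η = -6 * Δ / c := by rw [hη, Real.log_exp]
  have hl1 : Real.log (1 - η) = -6 * I / c := by rw [h1, Real.log_exp]
  constructor
  · rw [hlη, hl1]; field_simp; ring
  · rw [Real.log_div h1pos.ne' hηpos.ne', hlη, hl1]; field_simp; ring
end

section
/- The function c : (0,∞)² → (0,∞) defined implicitly by e^{-6Δ/c} + e^{-6I/c} = 1 is differentiable, with partial derivatives ∂c/∂Δ = 6η/h(η) and ∂c/∂I = 6(1-η)/h(η), where η = e^{-6Δ/c} and h(η) = -η ln η - (1-η) ln(1-η). -/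
/-!
For fixed `b > 0` the constraint `e^{-6a/c} + e^{-6b/c} = 1` can be solved explicitly for `a`:
`a = -(c/6) log (1 - e^{-6b/c})`. This map `c ↦ a` has positive derivative, so it is strictly
increasing, and the implicit function `a ↦ c` is its inverse. An inverse of a strictly monotone
map is continuous, hence differentiable with reciprocal derivative; at the solution point,
writing `η = e^{-6a/c}`, the reciprocal simplifies to `6η / h(η)` because `log η = -6a/c` and
`log (1 - η) = -6b/c`. The derivative in the second variable follows by symmetry `η ↔ 1 - η`.
-/

open Real Set Filter Topology

theorem StrictMonoOn.continuousAt_of_rightInverse {α β : Type*} [LinearOrder α]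
    [TopologicalSpace α] [OrderTopology α] [LinearOrder β] [TopologicalSpace β]
    [OrderTopology β] [DenselyOrdered β] {f : β → α} {g : α → β} {s : Set β} {t : Set α}
    {a : α} (hf : StrictMonoOn f s) (hfs : MapsTo f s t) (hgt : MapsTo g t s)
    (hfg : ∀ y ∈ t, f (g y) = y) (ht : t ∈ 𝓝 a) (hs : s ∈ 𝓝 (g a)) : ContinuousAt g a := by
  have hg : StrictMonoOn g t := fun y₁ hy₁ y₂ hy₂ hlt =>
    (hf.lt_iff_lt (hgt hy₁) (hgt hy₂)).1 (by rwa [hfg y₁ hy₁, hfg y₂ hy₂])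
  have himage : s ⊆ g '' t := fun x hx =>
    ⟨f x, hfs hx, hf.injOn (hgt (hfs hx)) hx (hfg (f x) (hfs hx))⟩
  exact hg.continuousAt_of_image_mem_nhds ht (mem_of_superset hs himage)

lemma exp_neg_six_mul_div_lt_one {b c : ℝ} (hb : 0 < b) (hc : 0 < c) : exp (-6 * b / c) < 1 :=
  exp_lt_one_iff.2 (div_neg_of_neg_of_pos (by linarith) hc)

lemma log_one_sub_exp_neg_six_mul_div_neg {b c : ℝ} (hb : 0 < b) (hc : 0 < c) :
    log (1 - exp (-6 * b / c)) < 0 :=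
  log_neg (sub_pos.2 (exp_neg_six_mul_div_lt_one hb hc)) (by linarith [exp_pos (-6 * b / c)])

/-- The value `a` for which `e^{-6a/c} + e^{-6b/c} = 1`. -/
noncomputable def solveFst (b c : ℝ) : ℝ := -(c / 6) * log (1 - exp (-6 * b / c))

lemma solveFst_pos {b c : ℝ} (hb : 0 < b) (hc : 0 < c) : 0 < solveFst b c :=
  mul_pos_of_neg_of_neg (by linarith) (log_one_sub_exp_neg_six_mul_div_neg hb hc)

lemma solveFst_eq {a b c : ℝ} (hc : c ≠ 0) (h : exp (-6 * a / c) + exp (-6 * b / c) = 1) :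
    solveFst b c = a := by
  rw [solveFst, show 1 - exp (-6 * b / c) = exp (-6 * a / c) by linarith, log_exp]
  field_simp

noncomputable def solveFstDeriv (b c : ℝ) : ℝ :=
  -log (1 - exp (-6 * b / c)) / 6 + b * exp (-6 * b / c) / (c * (1 - exp (-6 * b / c)))

lemma hasDerivAt_solveFst {b c : ℝ} (hb : 0 < b) (hc : 0 < c) :
    HasDerivAt (solveFst b) (solveFstDeriv b c) c := by
  have hne : 1 - exp (-6 * b / c) ≠ 0 := by linarith [exp_neg_six_mul_div_lt_one hb hc]
  have hquot : HasDerivAt (fun c : ℝ => -6 * b / c) (6 * b / c ^ 2) c := by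
    simpa [div_eq_mul_inv] using (hasDerivAt_inv hc.ne').const_mul (-6 * b)
  have hlog := (hquot.exp.const_sub 1).log hne
  have hcoef : HasDerivAt (fun c : ℝ => -(c / 6)) (-(1 / 6)) c :=
    ((hasDerivAt_id' c).div_const 6).neg
  refine (hcoef.mul hlog).congr_deriv ?_
  rw [solveFstDeriv]
  field_simp

lemma solveFstDeriv_pos {b c : ℝ} (hb : 0 < b) (hc : 0 < c) : 0 < solveFstDeriv b c := by
  have hpos : 0 < 1 - exp (-6 * b / c) := sub_pos.2 (exp_neg_six_mul_div_lt_one hb hc)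
  have hlog := log_one_sub_exp_neg_six_mul_div_neg hb hc
  have : 0 < b * exp (-6 * b / c) / (c * (1 - exp (-6 * b / c))) := by positivity
  rw [solveFstDeriv]
  linarith

lemma strictMonoOn_solveFst {b : ℝ} (hb : 0 < b) : StrictMonoOn (solveFst b) (Ioi 0) := by
  refine strictMonoOn_of_deriv_pos (convex_Ioi 0)
    (fun c hc => (hasDerivAt_solveFst hb hc).continuousAt.continuousWithinAt) fun c hc => ?_
  rw [interior_Ioi] at hc
  rw [(hasDerivAt_solveFst hb hc).deriv]
  exact solveFstDeriv_pos hb hc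

lemma inv_solveFstDeriv_eq {a b c : ℝ} (hc : 0 < c)
    (h : exp (-6 * a / c) + exp (-6 * b / c) = 1) :
    (solveFstDeriv b c)⁻¹ =
      6 * exp (-6 * a / c) /
        (-exp (-6 * a / c) * log (exp (-6 * a / c)) -
          (1 - exp (-6 * a / c)) * log (1 - exp (-6 * a / c))) := by
  have hη : 1 - exp (-6 * b / c) = exp (-6 * a / c) := by linarith
  have hη' : 1 - exp (-6 * a / c) = exp (-6 * b / c) := by linarith
  rw [solveFstDeriv, hη, hη', log_exp, log_exp]
  have := exp_pos (-6 * a / c)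
  field_simp
  ring

theorem hasDerivAt_of_exp_add_exp_eq_one {b : ℝ} (hb : 0 < b) {g : ℝ → ℝ}
    (hg : ∀ y, 0 < y → 0 < g y ∧ exp (-6 * y / g y) + exp (-6 * b / g y) = 1)
    {a : ℝ} (ha : 0 < a) :
    HasDerivAt g
      (6 * exp (-6 * a / g a) /
        (-exp (-6 * a / g a) * log (exp (-6 * a / g a)) -
          (1 - exp (-6 * a / g a)) * log (1 - exp (-6 * a / g a)))) a := by
  obtain ⟨hga, hsol⟩ := hg a ha
  have hleft : ∀ y ∈ Ioi (0 : ℝ), solveFst b (g y) = y := fun y hy =>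
    solveFst_eq (hg y hy).1.ne' (hg y hy).2
  have hcont : ContinuousAt g a :=
    (strictMonoOn_solveFst hb).continuousAt_of_rightInverse (fun _ hc => solveFst_pos hb hc)
      (fun y hy => (hg y hy).1) hleft (Ioi_mem_nhds ha) (Ioi_mem_nhds hga)
  rw [← inv_solveFstDeriv_eq hga hsol]
  exact (hasDerivAt_solveFst hb hga).of_local_left_inverse hcont
    (solveFstDeriv_pos hb hga).ne' (eventually_of_mem (Ioi_mem_nhds ha) hleft)

/-- The implicitly defined function `c(Δ, I)` (the unique positive solution of
`e^{-6Δ/c} + e^{-6I/c} = 1` on the positive quadrant) is differentiable, with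
partial derivatives `∂c/∂Δ = 6η/h(η)` and `∂c/∂I = 6(1-η)/h(η)`,
where `η = e^{-6Δ/c}` and `h(η) = -η ln η - (1-η) ln(1-η)`. -/
theorem stmt5 (c : ℝ → ℝ → ℝ)
    (hc : ∀ Δ I : ℝ, 0 < Δ → 0 < I →
      0 < c Δ I ∧ Real.exp (-6 * Δ / c Δ I) + Real.exp (-6 * I / c Δ I) = 1)
    (Δ I : ℝ) (hΔ : 0 < Δ) (hI : 0 < I) :
    HasDerivAt (fun Δ' => c Δ' I)
      (6 * Real.exp (-6 * Δ / c Δ I) /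
        (-(Real.exp (-6 * Δ / c Δ I)) * Real.log (Real.exp (-6 * Δ / c Δ I)) -
          (1 - Real.exp (-6 * Δ / c Δ I)) * Real.log (1 - Real.exp (-6 * Δ / c Δ I)))) Δ ∧
    HasDerivAt (fun I' => c Δ I')
      (6 * (1 - Real.exp (-6 * Δ / c Δ I)) /
        (-(Real.exp (-6 * Δ / c Δ I)) * Real.log (Real.exp (-6 * Δ / c Δ I)) -
          (1 - Real.exp (-6 * Δ / c Δ I)) * Real.log (1 - Real.exp (-6 * Δ / c Δ I)))) I := by
  refine ⟨hasDerivAt_of_exp_add_exp_eq_one hI (fun y hy => hc y I hy hI) hΔ, ?_⟩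
  have hswap : ∀ y, 0 < y →
      0 < c Δ y ∧ exp (-6 * y / c Δ y) + exp (-6 * Δ / c Δ y) = 1 := fun y hy =>
    ⟨(hc Δ y hΔ hy).1, by linarith [(hc Δ y hΔ hy).2]⟩
  have hη : exp (-6 * I / c Δ I) = 1 - exp (-6 * Δ / c Δ I) := by linarith [(hc Δ I hΔ hI).2]
  convert hasDerivAt_of_exp_add_exp_eq_one hΔ hswap hI using 2
  · rw [hη]
  · rw [hη, sub_sub_cancel]
    ring
end

section
/- Let x₁,…,x₅ be five distinct points in counterclockwise order on a circle and denote ℓ_{ij} = ℓ(x_i, x_j) the chord distance. Define the geometric cross-ratio of three consecutive arcs with endpoints (p,q,r,s) as η(p,q,r,s) = (ℓ(p,q)·ℓ(r,s))/(ℓ(p,r)·ℓ(q,s)). Then η(x₁,x₃,x₄,x₅) = η(x₂,x₃,x₄,x₅)/(1 - η(x₁,x₂,x₃,x₄)). -/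
/-!
A chord of the circle of radius `r` spanning an arc of angle `t ∈ [0, 2π]` has length
`2 |r| sin (t / 2)`, so Ptolemy's equality `ℓ₀₂ ℓ₁₃ = ℓ₀₁ ℓ₂₃ + ℓ₁₂ ℓ₀₃` for four points in cyclic
order is the identity `sin (a + b) sin (b + c) = sin a sin c + sin b sin (a + b + c)`. Dividing it
by `ℓ₀₂ ℓ₁₃` gives `1 - η(x₀, x₁, x₂, x₃) = ℓ₁₂ ℓ₀₃ / (ℓ₀₂ ℓ₁₃)`, and the relation follows by
clearing denominators.
-/

/-- Geometric cross-ratio of three consecutive arcs with endpoints `(p,q,r,s)`,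
computed with chord (Euclidean) distances. -/
noncomputable def etaG (p q r s : ℂ) : ℝ := (dist p q * dist r s) / (dist p r * dist q s)

theorem Real.sin_add_mul_sin_add (a b c : ℝ) :
    sin (a + b) * sin (b + c) = sin a * sin c + sin b * sin (a + b + c) := by
  simp only [sin_add, cos_add]
  linear_combination (sin a * sin c) * sin_sq_add_cos_sq b

section Circle

open Complex

variable (z : ℂ) (r : ℝ)

theorem dist_add_mul_exp_mul_I (a b : ℝ) :
    dist (z + r * exp (a * I)) (z + r * exp (b * I)) = 2 * |r| * |Real.sin ((b - a) / 2)| := by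
  have hfactor : exp (a * I) - exp (b * I) = -(exp (a * I) * (exp (I * ↑(b - a)) - 1)) := by
    rw [mul_sub, ← exp_add]; push_cast; ring_nf
  rw [dist_eq, add_sub_add_left_eq_sub, ← mul_sub, hfactor, norm_mul, norm_neg, norm_mul,
    norm_exp_ofReal_mul_I, norm_exp_I_mul_ofReal_sub_one, norm_real, Real.norm_eq_abs,
    Real.norm_eq_abs, abs_mul, abs_two]
  ring

theorem dist_add_mul_exp_mul_I_of_le {a b : ℝ} (hab : a ≤ b) (hba : b ≤ a + 2 * Real.pi) :
    dist (z + r * exp (a * I)) (z + r * exp (b * I)) = 2 * |r| * Real.sin ((b - a) / 2) := by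
  have hsin : 0 ≤ Real.sin ((b - a) / 2) :=
    Real.sin_nonneg_of_nonneg_of_le_pi (by linarith) (by linarith)
  rw [dist_add_mul_exp_mul_I, abs_of_nonneg hsin]

theorem add_mul_exp_mul_I_ne {a b : ℝ} (hr : r ≠ 0) (hab : a < b) (hba : b < a + 2 * Real.pi) :
    z + r * exp (a * I) ≠ z + r * exp (b * I) := by
  rw [← dist_pos, dist_add_mul_exp_mul_I_of_le z r hab.le hba.le]
  have := Real.sin_pos_of_pos_of_lt_pi (x := (b - a) / 2) (by linarith) (by linarith)
  positivity

theorem dist_mul_dist_eq_add_of_cyclic {a b c d : ℝ} (hab : a ≤ b) (hbc : b ≤ c) (hcd : c ≤ d)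
    (hda : d ≤ a + 2 * Real.pi) :
    let p : ℝ → ℂ := fun t ↦ z + r * exp (t * I)
    dist (p a) (p c) * dist (p b) (p d) =
      dist (p a) (p b) * dist (p c) (p d) + dist (p b) (p c) * dist (p a) (p d) := by
  intro p
  simp only [p, dist_add_mul_exp_mul_I_of_le z r (a := a) (b := c) (by linarith) (by linarith),
    dist_add_mul_exp_mul_I_of_le z r (a := b) (b := d) (by linarith) (by linarith),
    dist_add_mul_exp_mul_I_of_le z r (a := a) (b := b) (by linarith) (by linarith),
    dist_add_mul_exp_mul_I_of_le z r (a := c) (b := d) (by linarith) (by linarith),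
    dist_add_mul_exp_mul_I_of_le z r (a := b) (b := c) (by linarith) (by linarith),
    dist_add_mul_exp_mul_I_of_le z r (a := a) (b := d) (by linarith) (by linarith)]
  have hsin := Real.sin_add_mul_sin_add ((b - a) / 2) ((c - b) / 2) ((d - c) / 2)
  rw [show (b - a) / 2 + (c - b) / 2 = (c - a) / 2 by ring,
    show (c - b) / 2 + (d - c) / 2 = (d - b) / 2 by ring,
    show (c - a) / 2 + (d - c) / 2 = (d - a) / 2 by ring] at hsin
  linear_combination (4 * |r| ^ 2) * hsin

end Circle

theorem etaG_eq_div_one_sub_etaG_of_ptolemy {p₀ p₁ p₂ p₃ p₄ : ℂ}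
    (hptolemy : dist p₀ p₂ * dist p₁ p₃ = dist p₀ p₁ * dist p₂ p₃ + dist p₁ p₂ * dist p₀ p₃)
    (h02 : p₀ ≠ p₂) (h03 : p₀ ≠ p₃) (h12 : p₁ ≠ p₂) (h13 : p₁ ≠ p₃) (h24 : p₂ ≠ p₄) :
    etaG p₀ p₂ p₃ p₄ = etaG p₁ p₂ p₃ p₄ / (1 - etaG p₀ p₁ p₂ p₃) := by
  rw [← dist_ne_zero] at h02 h03 h12 h13 h24
  have hcomplement :
      1 - etaG p₀ p₁ p₂ p₃ = dist p₁ p₂ * dist p₀ p₃ / (dist p₀ p₂ * dist p₁ p₃) := by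
    rw [etaG]; field_simp; linear_combination hptolemy
  rw [hcomplement, etaG, etaG]
  field_simp

/-- Decomposition relation `η(ab,c,d) = η(b,c,d)/(1 - η(a,b,c))` for geometric
cross-ratios of five points in counterclockwise order on a circle. -/
theorem stmt7 (z : ℂ) (r : ℝ) (hr : 0 < r) (θ : Fin 5 → ℝ)
    (h01 : θ 0 < θ 1) (h12 : θ 1 < θ 2) (h23 : θ 2 < θ 3) (h34 : θ 3 < θ 4)
    (h40 : θ 4 < θ 0 + 2 * Real.pi)
    (x : Fin 5 → ℂ) (hx : ∀ i, x i = z + r * Complex.exp (θ i * Complex.I)) :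
    etaG (x 0) (x 2) (x 3) (x 4) =
      etaG (x 1) (x 2) (x 3) (x 4) / (1 - etaG (x 0) (x 1) (x 2) (x 3)) := by
  simp only [hx]
  refine etaG_eq_div_one_sub_etaG_of_ptolemy
    (dist_mul_dist_eq_add_of_cyclic z r h01.le h12.le h23.le (by linarith)) ?_ ?_ ?_ ?_ ?_ <;>
  exact add_mul_exp_mul_I_ne z r hr.ne' (by linarith) (by linarith)
end

section
/- Let c₀, …, c₄ > 0 and η₀, …, η₄ ∈ (0,1) (indices modulo 5) satisfy, for every i: (1) c_{i-1}·ln(1-η_{i-1}) + c_{i+1}·ln(1-η_{i+1}) = c_i·ln(η_i), and (2) η_i = (1-η_{i-1})·(1-η_{i+1}). Then c₀ = c₁ = c₂ = c₃ = c₄. -/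
/-- Five-fold partition argument: if `c i > 0`, `η i ∈ (0,1)` (indices mod 5) satisfy
`c (i-1) ln(1-η (i-1)) + c (i+1) ln(1-η (i+1)) = c i ln(η i)` and
`η i = (1-η (i-1))(1-η (i+1))` for every `i`, then all `c i` are equal. -/
theorem stmt13 (c η : ZMod 5 → ℝ)
    (hc : ∀ i, 0 < c i) (hη : ∀ i, η i ∈ Set.Ioo (0 : ℝ) 1)
    (h1 : ∀ i, c (i - 1) * Real.log (1 - η (i - 1)) + c (i + 1) * Real.log (1 - η (i + 1))
      = c i * Real.log (η i))
    (h2 : ∀ i, η i = (1 - η (i - 1)) * (1 - η (i + 1))) :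
    c 0 = c 1 ∧ c 1 = c 2 ∧ c 2 = c 3 ∧ c 3 = c 4 := by
  have hL : ∀ i, Real.log (1 - η i) < 0 := by
    intro i
    have h := hη i
    exact Real.log_neg (by linarith [h.2]) (by linarith [h.1])
  have key : ∀ i : ZMod 5,
      (c (i-1) - c i) * Real.log (1 - η (i-1))
        = (c i - c (i+1)) * Real.log (1 - η (i+1)) := by
    intro i
    have hpos1 : (0:ℝ) < 1 - η (i-1) := by linarith [(hη (i-1)).2]
    have hpos2 : (0:ℝ) < 1 - η (i+1) := by linarith [(hη (i+1)).2]
    have hlog : Real.log (η i) = Real.log (1 - η (i-1)) + Real.log (1 - η (i+1)) := by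
      rw [h2 i, Real.log_mul hpos1.ne' hpos2.ne']
    have h := h1 i
    rw [hlog] at h
    linear_combination h
  have k1 := key 1
  have k2 := key 2
  have k3 := key 3
  have k4 := key 4
  have k0 := key 0
  simp only [show ((1:ZMod 5)-1) = 0 by decide, show ((1:ZMod 5)+1) = 2 by decide] at k1
  simp only [show ((2:ZMod 5)-1) = 1 by decide, show ((2:ZMod 5)+1) = 3 by decide] at k2
  simp only [show ((3:ZMod 5)-1) = 2 by decide, show ((3:ZMod 5)+1) = 4 by decide] at k3
  simp only [show ((4:ZMod 5)-1) = 3 by decide, show ((4:ZMod 5)+1) = 0 by decide] at k4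
  simp only [show ((0:ZMod 5)-1) = 4 by decide, show ((0:ZMod 5)+1) = 1 by decide] at k0
  have L0 := hL 0
  have L1 := hL 1
  have L2 := hL 2
  have L3 := hL 3
  have L4 := hL 4
  -- step lemma: if x * a = y * b with a, b < 0, then sign of y follows sign of x
  have step : ∀ x y a b : ℝ, a < 0 → b < 0 → x * a = y * b →
      (0 < x → 0 < y) ∧ (x < 0 → y < 0) ∧ (x = 0 → y = 0) := by
    intro x y a b ha hb h
    refine ⟨fun hx => ?_, fun hx => ?_, fun hx => ?_⟩
    · nlinarith
    · nlinarith
    · subst hx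
      simp only [zero_mul] at h
      rcases mul_eq_zero.mp h.symm with h' | h'
      · exact h'
      · exact absurd h' hb.ne
  have s1 := step _ _ _ _ L0 L2 k1
  have s2 := step _ _ _ _ L1 L3 k2
  have s3 := step _ _ _ _ L2 L4 k3
  have s4 := step _ _ _ _ L3 L0 k4
  have hsum : (c 0 - c 1) + (c 1 - c 2) + (c 2 - c 3) + (c 3 - c 4) + (c 4 - c 0) = 0 := by
    ring
  rcases lt_trichotomy (c 0 - c 1) 0 with h | h | h
  · have p1 := s1.2.1 h
    have p2 := s2.2.1 p1
    have p3 := s3.2.1 p2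
    have p4 := s4.2.1 p3
    linarith
  · have p1 := s1.2.2 h
    have p2 := s2.2.2 p1
    have p3 := s3.2.2 p2
    have p4 := s4.2.2 p3
    refine ⟨by linarith, by linarith, by linarith, by linarith⟩
  · have p1 := s1.1 h
    have p2 := s2.1 p1
    have p3 := s3.1 p2
    have p4 := s4.1 p3
    linarith
end

section
/- Let η₁, η₂, η₃, η₄, η₅ ∈ (0,1) satisfy the two chains of equalities: η₃/(1-η₃) = η₁/((1-η₄)(1-η₁)) = η₅/(1-η₅) + η₁/((1-η₅)(1-η₁)), and η₂/((1-η₃)(1-η₂)) = η₄/(1-η₄) = η₅/(1-η₅) + η₂/((1-η₅)(1-η₂)). Then η₃ = η₁/(1-η₂), η₄ = η₂/(1-η₁), and η₅ = η₁η₂/((1-η₁)(1-η₂)). -/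
/-! Since `x / (1 - x) = (1 - x)⁻¹ - 1`, the outer equalities of the two chains say exactly
`1 - η₃ = (1 - η₁)(1 - η₅)` and `1 - η₄ = (1 - η₂)(1 - η₅)`. Substituting the second into the
first equality of the first chain gives `η₃ (1 - η₂) = η₁`, and the formulas for `η₄` and `η₅`
then follow by linear elimination. -/

theorem one_sub_eq_mul_of_div_one_sub_eq {K : Type*} [Field K] {x y z : K}
    (hx : 1 - x ≠ 0) (hy : 1 - y ≠ 0) (hz : 1 - z ≠ 0)
    (h : z / (1 - z) = y / (1 - y) + x / ((1 - y) * (1 - x))) :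
    1 - z = (1 - x) * (1 - y) := by
  field_simp at h
  linear_combination -h

theorem stmt14_general (η₁ η₂ η₃ η₄ η₅ : ℝ)
    (h₁ : η₁ ∈ Set.Ioo (0 : ℝ) 1) (h₂ : η₂ ∈ Set.Ioo (0 : ℝ) 1)
    (h₃ : η₃ ∈ Set.Ioo (0 : ℝ) 1) (h₄ : η₄ ∈ Set.Ioo (0 : ℝ) 1)
    (h₅ : η₅ ∈ Set.Ioo (0 : ℝ) 1)
    (ha1 : η₃ / (1 - η₃) = η₁ / ((1 - η₄) * (1 - η₁)))
    (ha2 : η₁ / ((1 - η₄) * (1 - η₁)) = η₅ / (1 - η₅) + η₁ / ((1 - η₅) * (1 - η₁)))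
    (hb2 : η₄ / (1 - η₄) = η₅ / (1 - η₅) + η₂ / ((1 - η₅) * (1 - η₂))) :
    η₃ = η₁ / (1 - η₂) ∧ η₄ = η₂ / (1 - η₁) ∧ η₅ = η₁ * η₂ / ((1 - η₁) * (1 - η₂)) := by
  have n₁ : 1 - η₁ ≠ 0 := (sub_pos.2 h₁.2).ne'
  have n₂ : 1 - η₂ ≠ 0 := (sub_pos.2 h₂.2).ne'
  have n₃ : 1 - η₃ ≠ 0 := (sub_pos.2 h₃.2).ne'
  have n₄ : 1 - η₄ ≠ 0 := (sub_pos.2 h₄.2).ne'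
  have n₅ : 1 - η₅ ≠ 0 := (sub_pos.2 h₅.2).ne'
  have e₃ : 1 - η₃ = (1 - η₁) * (1 - η₅) :=
    one_sub_eq_mul_of_div_one_sub_eq n₁ n₅ n₃ (ha1.trans ha2)
  have e₄ : 1 - η₄ = (1 - η₂) * (1 - η₅) :=
    one_sub_eq_mul_of_div_one_sub_eq n₂ n₅ n₄ hb2
  have hη₃ : η₃ * (1 - η₂) = η₁ := by
    rw [div_eq_div_iff n₃ (mul_ne_zero n₄ n₁), e₄, e₃] at ha1
    exact mul_left_cancel₀ (mul_ne_zero n₁ n₅) (by linear_combination ha1)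
  have hη₄ : η₄ * (1 - η₁) = η₂ := by linear_combination (1 - η₂) * e₃ - (1 - η₁) * e₄ + hη₃
  have hη₅ : η₅ * ((1 - η₁) * (1 - η₂)) = η₁ * η₂ := by
    linear_combination (1 - η₂) * e₃ + hη₃
  exact ⟨(eq_div_iff n₂).2 hη₃, (eq_div_iff n₁).2 hη₄, (eq_div_iff (mul_ne_zero n₁ n₂)).2 hη₅⟩

/-- Algebraic core of the decomposition relations for non-chiral edges: matching
coefficients in three decompositions yields the cross-ratio decomposition rules. -/
theorem stmt14 (η₁ η₂ η₃ η₄ η₅ : ℝ)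
    (h₁ : η₁ ∈ Set.Ioo (0 : ℝ) 1) (h₂ : η₂ ∈ Set.Ioo (0 : ℝ) 1)
    (h₃ : η₃ ∈ Set.Ioo (0 : ℝ) 1) (h₄ : η₄ ∈ Set.Ioo (0 : ℝ) 1)
    (h₅ : η₅ ∈ Set.Ioo (0 : ℝ) 1)
    (ha1 : η₃ / (1 - η₃) = η₁ / ((1 - η₄) * (1 - η₁)))
    (ha2 : η₁ / ((1 - η₄) * (1 - η₁)) = η₅ / (1 - η₅) + η₁ / ((1 - η₅) * (1 - η₁)))
    (hb1 : η₂ / ((1 - η₃) * (1 - η₂)) = η₄ / (1 - η₄))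
    (hb2 : η₄ / (1 - η₄) = η₅ / (1 - η₅) + η₂ / ((1 - η₅) * (1 - η₂))) :
    η₃ = η₁ / (1 - η₂) ∧ η₄ = η₂ / (1 - η₁) ∧ η₅ = η₁ * η₂ / ((1 - η₁) * (1 - η₂)) :=
  stmt14_general η₁ η₂ η₃ η₄ η₅ h₁ h₂ h₃ h₄ h₅ ha1 ha2 hb2
end

section
/- Let n ≥ 3 and let η(i,j,k) ∈ (0,1) be given for all triples of consecutive arcs determined by n cyclically ordered marked points, satisfying the complement relations (η(a,b,c) = 1 - η(b,c,d) = η(c,d,a) where d is the complementary arc of abc) and the decomposition relations (η(ab,c,d) = η(b,c,d)/(1-η(a,b,c)), η(a,b,cd) = η(a,b,c)/(1-η(b,c,d)), η(a,bc,d) = η(ab,c,d)·η(a,b,cd)). Then there exist n points φ(x₁), …, φ(x_n) on the unit circle, in the same cyclic order as x₁, …, x_n, such that for every triple of consecutive arc-unions (a,b,c) the given η(a,b,c) equals the geometric cross-ratio ℓ(φ_a)·ℓ(φ_c)/(ℓ(φ_{ab})·ℓ(φ_{bc})) computed with chord lengths on the circle. -/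
/-- Four indices appear in this cyclic order (some rotation of them is increasing). -/
def Cyc4 {n : ℕ} (i j k l : Fin n) : Prop :=
  (i < j ∧ j < k ∧ k < l) ∨ (j < k ∧ k < l ∧ l < i) ∨
  (k < l ∧ l < i ∧ i < j) ∨ (l < i ∧ i < j ∧ j < k)

/-- Five indices appear in this cyclic order (some rotation of them is increasing). -/
def Cyc5 {n : ℕ} (i j k l m : Fin n) : Prop :=
  (i < j ∧ j < k ∧ k < l ∧ l < m) ∨ (j < k ∧ k < l ∧ l < m ∧ m < i) ∨
  (k < l ∧ l < m ∧ m < i ∧ i < j) ∨ (l < m ∧ m < i ∧ i < j ∧ j < k) ∨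
  (m < i ∧ i < j ∧ j < k ∧ k < l)

/-- Geometric cross-ratio of the three consecutive arcs with endpoints `(p,q,r,s)`,
computed with chord (Euclidean) distances: `ℓ(p,q)·ℓ(r,s)/(ℓ(p,r)·ℓ(q,s))`. -/
noncomputable def geomEta (p q r s : ℂ) : ℝ := (dist p q * dist r s) / (dist p r * dist q s)

theorem chordAux (a b : ℝ) : dist (Complex.exp (a*Complex.I)) (Complex.exp (b*Complex.I))
    = 2 * |Real.sin ((a-b)/2)| := by
  have h : (a:ℂ) * Complex.I = ((a+b)/2 : ℝ) * Complex.I + ((a-b)/2 : ℝ) * Complex.I := by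
    push_cast; ring
  have h2 : (b:ℂ) * Complex.I = ((a+b)/2 : ℝ) * Complex.I + (-((a-b)/2) : ℝ) * Complex.I := by
    push_cast; ring
  rw [Complex.dist_eq, h, h2, Complex.exp_add, Complex.exp_add, ← mul_sub, norm_mul,
    Complex.norm_exp_ofReal_mul_I, one_mul]
  have key : Complex.exp (((a-b)/2 : ℝ) * Complex.I) - Complex.exp ((-((a-b)/2) : ℝ) * Complex.I)
      = 2 * Real.sin ((a-b)/2) * Complex.I := by
    rw [Complex.exp_mul_I, Complex.exp_mul_I]
    push_cast
    rw [Complex.cos_neg, Complex.sin_neg]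
    ring_nf
  rw [key]
  rw [norm_mul, norm_mul, Complex.norm_I, Complex.norm_two, Complex.norm_real, Real.norm_eq_abs]
  ring

noncomputable def sq1 (x : ℝ) : ℝ := Real.sqrt (1 + x^2)

theorem sq1_pos (x : ℝ) : 0 < sq1 x := Real.sqrt_pos.2 (by positivity)

theorem distfAux {x y : ℝ} (h : x < y) :
    dist (Complex.exp ((2 * Real.arctan x : ℝ)*Complex.I))
      (Complex.exp ((2 * Real.arctan y : ℝ)*Complex.I))
    = 2 * (y - x) / (sq1 x * sq1 y) := by
  rw [chordAux]
  have h2 : (2 * Real.arctan x - 2 * Real.arctan y) / 2 = Real.arctan x - Real.arctan y := by ring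
  rw [h2, Real.sin_sub, Real.sin_arctan, Real.cos_arctan, Real.sin_arctan, Real.cos_arctan]
  have hx : (0:ℝ) < Real.sqrt (1 + x^2) := Real.sqrt_pos.2 (by positivity)
  have hy : (0:ℝ) < Real.sqrt (1 + y^2) := Real.sqrt_pos.2 (by positivity)
  have e : x / Real.sqrt (1 + x^2) * (1 / Real.sqrt (1 + y^2))
      - 1 / Real.sqrt (1 + x^2) * (y / Real.sqrt (1 + y^2))
      = -((y - x)/(Real.sqrt (1 + x^2) * Real.sqrt (1 + y^2))) := by
    field_simp
    ring
  rw [e, abs_neg, abs_of_nonneg (div_nonneg (by linarith) (by positivity))]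
  unfold sq1
  ring

theorem dist0Aux (x : ℝ) :
    dist (Complex.exp ((-Real.pi : ℝ)*Complex.I))
      (Complex.exp ((2 * Real.arctan x : ℝ)*Complex.I))
    = 2 / sq1 x := by
  rw [chordAux]
  have h2 : (-Real.pi - 2 * Real.arctan x) / 2 = -(Real.arctan x + Real.pi/2) := by ring
  rw [h2, Real.sin_neg, abs_neg, Real.sin_add_pi_div_two, Real.cos_arctan,
    abs_of_nonneg (by positivity)]
  unfold sq1
  ring

noncomputable def etaN (n : ℕ) (η : Fin n → Fin n → Fin n → Fin n → ℝ) (a b c d : ℕ) : ℝ :=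
  if h : a < n ∧ b < n ∧ c < n ∧ d < n then η ⟨a,h.1⟩ ⟨b,h.2.1⟩ ⟨c,h.2.2.1⟩ ⟨d,h.2.2.2⟩ else 0

noncomputable def ue (n : ℕ) (η : Fin n → Fin n → Fin n → Fin n → ℝ) : ℕ → ℝ
  | 0 => 0
  | 1 => 0
  | 2 => 1
  | (m+3) => ue n η (m+2) / (1 - etaN n η 0 1 (m+2) (m+3))

theorem geomEta_rot2 (p q r s : ℂ) : geomEta r s p q = geomEta p q r s := by
  unfold geomEta
  rw [dist_comm r p, dist_comm s q]
  ring

/-- Emergence of conformal geometry: abstract cross-ratio data `η i j k l ∈ (0,1)`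
(assigned to each quadruple of cyclically ordered marked points, i.e. to each triple of
consecutive arc-unions `a = (i,j)`, `b = (j,k)`, `c = (k,l)`) satisfying the complement
and decomposition relations is realized by actual points `exp(θᵢ·I)` on the unit circle,
in the same cyclic order, whose geometric cross-ratios (via chord lengths) reproduce the
given data. -/
theorem stmt19 (n : ℕ) (hn : 3 ≤ n) (η : Fin n → Fin n → Fin n → Fin n → ℝ)
    (hrange : ∀ i j k l, Cyc4 i j k l → η i j k l ∈ Set.Ioo (0 : ℝ) 1)
    (hcompl : ∀ i j k l, Cyc4 i j k l →
      η i j k l = 1 - η j k l i ∧ η i j k l = η k l i j)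
    (hdecomp : ∀ i j k l m, Cyc5 i j k l m →
      η i k l m = η j k l m / (1 - η i j k l) ∧
      η i j k m = η i j k l / (1 - η j k l m) ∧
      η i j l m = η i k l m * η i j k m) :
    ∃ θ : Fin n → ℝ, StrictMono θ ∧ (∀ i j, θ j - θ i < 2 * Real.pi) ∧
      ∀ i j k l, Cyc4 i j k l →
        η i j k l = geomEta (Complex.exp (θ i * Complex.I)) (Complex.exp (θ j * Complex.I))
          (Complex.exp (θ k * Complex.I)) (Complex.exp (θ l * Complex.I)) := by
  -- notation
  set u : ℕ → ℝ := ue n η with hu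
  have hE : ∀ (a b c d : ℕ) (ha : a < n) (hb : b < n) (hc : c < n) (hd : d < n),
      etaN n η a b c d = η ⟨a, ha⟩ ⟨b, hb⟩ ⟨c, hc⟩ ⟨d, hd⟩ := by
    intro a b c d ha hb hc hd
    rw [etaN, dif_pos ⟨ha, hb, hc, hd⟩]
  have hrangeN : ∀ a b c d : ℕ, a < b → b < c → c < d → d < n →
      0 < etaN n η a b c d ∧ etaN n η a b c d < 1 := by
    intro a b c d h1 h2 h3 h4
    rw [hE a b c d (by omega) (by omega) (by omega) h4]
    exact hrange _ _ _ _ (by simp only [Cyc4, Fin.mk_lt_mk]; omega)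
  have hrotN : ∀ a b c d : ℕ, a < b → b < c → c < d → d < n →
      etaN n η b c d a = 1 - etaN n η a b c d ∧ etaN n η c d a b = etaN n η a b c d ∧
      etaN n η d a b c = 1 - etaN n η a b c d := by
    intro a b c d h1 h2 h3 h4
    have ha : a < n := by omega
    have hb : b < n := by omega
    have hc : c < n := by omega
    rw [hE a b c d ha hb hc h4, hE b c d a hb hc h4 ha, hE c d a b hc h4 ha hb,
      hE d a b c h4 ha hb hc]
    have H1 := hcompl ⟨a,ha⟩ ⟨b,hb⟩ ⟨c,hc⟩ ⟨d,h4⟩ (by simp only [Cyc4, Fin.mk_lt_mk]; omega)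
    have H2 := hcompl ⟨c,hc⟩ ⟨d,h4⟩ ⟨a,ha⟩ ⟨b,hb⟩ (by simp only [Cyc4, Fin.mk_lt_mk]; omega)
    refine ⟨by linarith [H1.1], H1.2.symm, by linarith [H1.2, H2.1]⟩
  have hdecompN : ∀ a b c d e : ℕ, a < b → b < c → c < d → d < e → e < n →
      etaN n η a c d e = etaN n η b c d e / (1 - etaN n η a b c d) ∧
      etaN n η a b c e = etaN n η a b c d / (1 - etaN n η b c d e) ∧
      etaN n η a b d e = etaN n η a c d e * etaN n η a b c e := by
    intro a b c d e h1 h2 h3 h4 h5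
    have ha : a < n := by omega
    have hb : b < n := by omega
    have hc : c < n := by omega
    have hd : d < n := by omega
    have H := hdecomp ⟨a,ha⟩ ⟨b,hb⟩ ⟨c,hc⟩ ⟨d,hd⟩ ⟨e,h5⟩
      (by simp only [Cyc5, Fin.mk_lt_mk]; omega)
    rw [hE a c d e ha hc hd h5, hE b c d e hb hc hd h5, hE a b c d ha hb hc hd,
      hE a b c e ha hb hc h5, hE a b d e ha hb hd h5]
    exact H
  have hUN : ∀ p q r s : ℕ, 0 < p → p < q → q < r → r < s → s < n →
      1 - etaN n η 0 p q r = (1 - etaN n η 0 p q s)/(1 - etaN n η 0 p r s) := by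
    intro p q r s h0 h1 h2 h3 h4
    have hz : 0 < n := by omega
    have hp : p < n := by omega
    have hq : q < n := by omega
    have hr : r < n := by omega
    set Z : Fin n := ⟨0, hz⟩
    set P : Fin n := ⟨p, hp⟩
    set Q : Fin n := ⟨q, hq⟩
    set R : Fin n := ⟨r, hr⟩
    set S : Fin n := ⟨s, h4⟩
    have d1 := (hdecomp R S Z P Q (by simp only [Cyc5, Z, P, Q, R, S, Fin.mk_lt_mk]; omega)).1
    -- d1 : η R Z P Q = η S Z P Q / (1 - η R S Z P)
    have c1 : η R Z P Q = 1 - η Z P Q R := by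
      have e1 := (hcompl Q R Z P (by simp only [Cyc4, Z, P, Q, R, Fin.mk_lt_mk]; omega)).1
      have e2 := (hcompl Z P Q R (by simp only [Cyc4, Z, P, Q, R, Fin.mk_lt_mk]; omega)).2
      linarith
    have c2 : η S Z P Q = 1 - η Z P Q S := by
      have e1 := (hcompl Q S Z P (by simp only [Cyc4, Z, P, Q, S, Fin.mk_lt_mk]; omega)).1
      have e2 := (hcompl Z P Q S (by simp only [Cyc4, Z, P, Q, S, Fin.mk_lt_mk]; omega)).2
      linarith
    have c3 : η R S Z P = η Z P R S :=
      (hcompl R S Z P (by simp only [Cyc4, Z, P, R, S, Fin.mk_lt_mk]; omega)).2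
    rw [c1, c2, c3] at d1
    rw [hE 0 p q r hz hp hq hr, hE 0 p q s hz hp hq h4, hE 0 p r s hz hp hr h4]
    exact d1
  -- recursion equation
  have hrec : ∀ m : ℕ, u (m+3) = u (m+2) / (1 - etaN n η 0 1 (m+2) (m+3)) := by
    intro m; rw [hu]; rfl
  have hu1 : u 1 = 0 := by rw [hu]; rfl
  have hu2 : u 2 = 1 := by rw [hu]; rfl
  -- monotonicity
  have humono : ∀ m : ℕ, 1 ≤ m → m + 1 < n → 0 < u (m+1) ∧ u m < u (m+1) := by
    intro m
    induction m with
    | zero => omega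
    | succ p ih =>
      intro _ h2
      rcases Nat.eq_zero_or_pos p with hp | hp
      · subst hp; rw [hu1, hu2]; norm_num
      · obtain ⟨q, rfl⟩ : ∃ q, p = q + 1 := ⟨p - 1, by omega⟩
        have hprev := ih (by omega) (by omega)
        have hF := hrangeN 0 1 (q+2) (q+3) (by omega) (by omega) (by omega) (by omega)
        have hrw := hrec q
        have hden : (0:ℝ) < 1 - etaN n η 0 1 (q+2) (q+3) := by linarith [hF.2]
        have hlt : u (q+2) < u (q+3) := by
          rw [hrw, lt_div_iff₀ hden]
          nlinarith [hprev.1, hF.1]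
        exact ⟨by linarith [hprev.1], hlt⟩
  have hchain : ∀ a b : ℕ, 1 ≤ a → a < b → b < n → u a < u b := by
    intro a b ha hab
    induction b with
    | zero => omega
    | succ c ih =>
      intro hbn
      rcases Nat.lt_or_ge a c with h | h
      · exact lt_trans (ih h (by omega)) (humono c (by omega) hbn).2
      · have : a = c := by omega
        subst this
        exact (humono a ha hbn).2
  have hupos : ∀ m : ℕ, 2 ≤ m → m < n → 0 < u m := by
    intro m hm hmn
    have := hchain 1 m (by omega) (by omega) hmn
    rw [hu1] at this; exact this
  -- key lemma, j = 1 case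
  have key1 : ∀ l, l < n → ∀ k, 1 < k → k < l → etaN n η 0 1 k l = (u l - u k)/(u l) := by
    intro l
    induction l using Nat.strong_induction_on with
    | _ l IH =>
      intro hln k hk hkl
      obtain ⟨m, rfl⟩ : ∃ m, l = m + 3 := ⟨l - 3, by omega⟩
      have hpos2 : 0 < u (m+2) := hupos (m+2) (by omega) (by omega)
      have hposl : 0 < u (m+3) := hupos (m+3) (by omega) hln
      have hmlt : u (m+2) < u (m+3) := hchain (m+2) (m+3) (by omega) (by omega) hln
      have hFb := hrangeN 0 1 (m+2) (m+3) (by omega) (by omega) (by omega) hln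
      have hden : (0:ℝ) < 1 - etaN n η 0 1 (m+2) (m+3) := by linarith [hFb.2]
      have hbase : etaN n η 0 1 (m+2) (m+3) = (u (m+3) - u (m+2))/(u (m+3)) := by
        have h := hrec m
        rw [eq_div_iff (ne_of_gt hposl)]
        rw [eq_div_iff (ne_of_gt hden)] at h
        linear_combination -h
      by_cases hk1 : k = m + 2
      · rw [hk1]; exact hbase
      · have hkm : k < m + 2 := by omega
        have hprev := IH (m+2) (by omega) (by omega) k hk hkm
        have hUv := hUN 1 k (m+2) (m+3) (by omega) hk hkm (by omega) hln
        rw [hbase, hprev] at hUv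
        have hupk : 0 < u k := hupos k (by omega) (by omega)
        have hkm2 : u k < u (m+2) := hchain k (m+2) (by omega) hkm (by omega)
        have h1 : (1:ℝ) - (u (m+3) - u (m+2))/(u (m+3)) = u (m+2)/u (m+3) := by
          field_simp
          ring
        rw [h1] at hUv
        have h2 : (1:ℝ) - (u (m+2) - u k)/(u (m+2)) = u k/u (m+2) := by
          field_simp
          ring
        rw [h2] at hUv
        have hdd : u (m+2)/u (m+3) ≠ 0 := ne_of_gt (by positivity)
        rw [eq_div_iff hdd] at hUv
        have hsim : u k / u (m+2) * (u (m+2) / u (m+3)) = u k / u (m+3) := by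
          field_simp
        rw [hsim, div_eq_iff (ne_of_gt hposl)] at hUv
        rw [eq_div_iff (ne_of_gt hposl)]
        linear_combination hUv
  -- key lemma, general
  have key : ∀ j k l : ℕ, 0 < j → j < k → k < l → l < n →
      etaN n η 0 j k l = (u l - u k)/(u l - u j) := by
    intro j k l hj hjk hkl hln
    rcases Nat.lt_or_ge j 2 with hj1 | hj2
    · have : j = 1 := by omega
      subst this
      rw [hu1, sub_zero]
      exact key1 l hln k hjk hkl
    · have hd := (hdecompN 0 1 j k l (by omega) (by omega) hjk hkl hln).2.2
      -- hd : etaN 0 1 k l = etaN 0 j k l * etaN 0 1 j l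
      rw [key1 l hln k (by omega) hkl, key1 l hln j (by omega) (lt_trans hjk hkl)] at hd
      have hul : 0 < u l := hupos l (by omega) hln
      have hjl : u j < u l := hchain j l (by omega) (lt_trans hjk hkl) hln
      rw [eq_div_iff (ne_of_gt (by linarith : (0:ℝ) < u l - u j))]
      field_simp at hd
      linear_combination -hd
  -- values for quadruples not containing 0
  have keyA : ∀ a b c d : ℕ, 0 < a → a < b → b < c → c < d → d < n →
      etaN n η a b c d = ((u b - u a)*(u d - u c))/((u c - u a)*(u d - u b)) := by
    intro a b c d ha hab hbc hcd hdn
    have hd1 := (hdecompN 0 a b c d (by omega) hab hbc hcd hdn).1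
    -- etaN 0 b c d = etaN a b c d / (1 - etaN 0 a b c)
    have hr := hrangeN 0 a b c (by omega) hab hbc (by omega)
    have hden : (0:ℝ) < 1 - etaN n η 0 a b c := by linarith [hr.2]
    rw [key b c d (by omega) hbc hcd hdn, key a b c ha hab hbc (by omega)] at hd1
    have hba : u a < u b := hchain a b (by omega) hab (by omega)
    have hcb : u b < u c := hchain b c (by omega) hbc (by omega)
    have hdc : u c < u d := hchain c d (by omega) hcd hdn
    have hca : (0:ℝ) < u c - u a := by linarith
    have hdb : (0:ℝ) < u d - u b := by linarith
    rw [key a b c ha hab hbc (by omega)] at hden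
    rw [eq_div_iff (ne_of_gt hden)] at hd1
    -- hd1 : (u d - u c)/(u d - u b) = etaN a b c d * (1 - (u c - u b)/(u c - u a))
    rw [eq_div_iff (ne_of_gt (mul_pos hca hdb))]
    field_simp at hd1
    linear_combination -hd1
  -- the circle points
  set θ : Fin n → ℝ := fun i => if i.val = 0 then -Real.pi else 2 * Real.arctan (u i.val)
    with hθdef
  have hθ0 : ∀ i : Fin n, i.val = 0 → θ i = -Real.pi := by
    intro i h; simp [hθdef, h]
  have hθ1 : ∀ i : Fin n, i.val ≠ 0 → θ i = 2 * Real.arctan (u i.val) := by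
    intro i h; simp [hθdef, h]
  have hdist : ∀ i j : Fin n, i < j →
      dist (Complex.exp (θ i * Complex.I)) (Complex.exp (θ j * Complex.I)) =
      if i.val = 0 then 2 / sq1 (u j.val)
      else 2 * (u j.val - u i.val)/(sq1 (u i.val) * sq1 (u j.val)) := by
    intro i j hij
    have hij' : i.val < j.val := hij
    by_cases h0 : i.val = 0
    · rw [if_pos h0, hθ0 i h0, hθ1 j (by omega)]
      exact dist0Aux (u j.val)
    · rw [if_neg h0, hθ1 i h0, hθ1 j (by omega)]
      exact distfAux (hchain i.val j.val (by omega) hij' j.isLt)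
  have hmono : StrictMono θ := by
    intro i j hij
    have hij' : i.val < j.val := hij
    by_cases h0 : i.val = 0
    · rw [hθ0 i h0, hθ1 j (by omega)]
      have := Real.neg_pi_div_two_lt_arctan (u j.val)
      have hpi := Real.pi_pos
      linarith
    · rw [hθ1 i h0, hθ1 j (by omega)]
      have := Real.arctan_strictMono (hchain i.val j.val (by omega) hij' j.isLt)
      linarith
  have hbounds : ∀ i : Fin n, -Real.pi ≤ θ i ∧ θ i < Real.pi := by
    intro i
    by_cases h0 : i.val = 0
    · rw [hθ0 i h0]; exact ⟨le_refl _, by linarith [Real.pi_pos]⟩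
    · rw [hθ1 i h0]
      have h1 := Real.neg_pi_div_two_lt_arctan (u i.val)
      have h2 := Real.arctan_lt_pi_div_two (u i.val)
      constructor <;> linarith
  have GEO : ∀ a b c d : Fin n, a < b → b < c → c < d →
      geomEta (Complex.exp (θ a * Complex.I)) (Complex.exp (θ b * Complex.I))
        (Complex.exp (θ c * Complex.I)) (Complex.exp (θ d * Complex.I))
        = etaN n η a.val b.val c.val d.val ∧
      geomEta (Complex.exp (θ d * Complex.I)) (Complex.exp (θ a * Complex.I))
        (Complex.exp (θ b * Complex.I)) (Complex.exp (θ c * Complex.I))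
        = 1 - etaN n η a.val b.val c.val d.val := by
    intro a b c d hab hbc hcd
    have h1 : a.val < b.val := hab
    have h2 : b.val < c.val := hbc
    have h3 : c.val < d.val := hcd
    have dab := hdist a b hab
    have dac := hdist a c (lt_trans hab hbc)
    have dad := hdist a d (lt_trans (lt_trans hab hbc) hcd)
    have dbc := hdist b c hbc
    have dbd := hdist b d (lt_trans hbc hcd)
    have dcd := hdist c d hcd
    rw [if_neg (show ¬ b.val = 0 by omega)] at dbc dbd
    rw [if_neg (show ¬ c.val = 0 by omega)] at dcd
    have hsb := sq1_pos (u b.val)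
    have hsc := sq1_pos (u c.val)
    have hsd := sq1_pos (u d.val)
    have hcb : u b.val < u c.val := hchain b.val c.val (by omega) h2 c.isLt
    have hdb : u b.val < u d.val := hchain b.val d.val (by omega) (by omega) d.isLt
    have hdc : u c.val < u d.val := hchain c.val d.val (by omega) h3 d.isLt
    unfold geomEta
    rw [dist_comm (Complex.exp (θ d * Complex.I)) (Complex.exp (θ a * Complex.I)),
      dist_comm (Complex.exp (θ d * Complex.I)) (Complex.exp (θ b * Complex.I))]
    have eb : sq1 (u b.val) ≠ 0 := ne_of_gt hsb
    have ec : sq1 (u c.val) ≠ 0 := ne_of_gt hsc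
    have ed : sq1 (u d.val) ≠ 0 := ne_of_gt hsd
    have fdb : u d.val - u b.val ≠ 0 := ne_of_gt (by linarith)
    have fdc : u d.val - u c.val ≠ 0 := ne_of_gt (by linarith)
    have fcb : u c.val - u b.val ≠ 0 := ne_of_gt (by linarith)
    by_cases h0 : a.val = 0
    · rw [if_pos h0] at dab dac dad
      rw [dab, dac, dad, dbc, dbd, dcd, h0,
        key b.val c.val d.val (by omega) h2 h3 d.isLt]
      constructor
      · field_simp
      · field_simp
        ring
    · rw [if_neg h0] at dab dac dad
      have hba : u a.val < u b.val := hchain a.val b.val (by omega) h1 b.isLt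
      have hca : u a.val < u c.val := by linarith
      have hda : u a.val < u d.val := by linarith
      have hsa := sq1_pos (u a.val)
      have ea : sq1 (u a.val) ≠ 0 := ne_of_gt hsa
      have fba : u b.val - u a.val ≠ 0 := ne_of_gt (by linarith)
      have fca : u c.val - u a.val ≠ 0 := ne_of_gt (by linarith)
      have fda : u d.val - u a.val ≠ 0 := ne_of_gt (by linarith)
      rw [dab, dac, dad, dbc, dbd, dcd,
        keyA a.val b.val c.val d.val (by omega) h1 h2 h3 d.isLt]
      constructor
      · field_simp
      · field_simp
        ring
  refine ⟨θ, hmono, fun i j => by linarith [(hbounds i).1, (hbounds j).2, Real.pi_pos], ?_⟩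
  intro i j k l hc
  have heta : η i j k l = etaN n η i.val j.val k.val l.val :=
    (hE i.val j.val k.val l.val i.isLt j.isLt k.isLt l.isLt).symm
  rw [heta]
  rcases hc with ⟨h1,h2,h3⟩ | ⟨h1,h2,h3⟩ | ⟨h1,h2,h3⟩ | ⟨h1,h2,h3⟩
  · exact ((GEO i j k l h1 h2 h3).1).symm
  · rw [(GEO j k l i h1 h2 h3).2]
    have := (hrotN j.val k.val l.val i.val h1 h2 h3 i.isLt).2.2
    linarith
  · rw [show geomEta (Complex.exp (θ i * Complex.I)) (Complex.exp (θ j * Complex.I))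
        (Complex.exp (θ k * Complex.I)) (Complex.exp (θ l * Complex.I))
        = geomEta (Complex.exp (θ k * Complex.I)) (Complex.exp (θ l * Complex.I))
        (Complex.exp (θ i * Complex.I)) (Complex.exp (θ j * Complex.I)) from
        (geomEta_rot2 _ _ _ _).symm,
      (GEO k l i j h1 h2 h3).1]
    have := (hrotN k.val l.val i.val j.val h1 h2 h3 j.isLt).2.1
    linarith
  · rw [show geomEta (Complex.exp (θ i * Complex.I)) (Complex.exp (θ j * Complex.I))
        (Complex.exp (θ k * Complex.I)) (Complex.exp (θ l * Complex.I))
        = geomEta (Complex.exp (θ k * Complex.I)) (Complex.exp (θ l * Complex.I))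
        (Complex.exp (θ i * Complex.I)) (Complex.exp (θ j * Complex.I)) from
        (geomEta_rot2 _ _ _ _).symm,
      (GEO l i j k h1 h2 h3).2]
    have := (hrotN l.val i.val j.val k.val h1 h2 h3 k.isLt).1
    linarith
end
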